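/- arXiv:2412.20115 — 2 statements merged into one kernel-verified Lean document; each statement's English description precedes it below -/
import Mathlib

section
/- Let f : E → ℝ be differentiable, convex, and L-smooth with L > 0, let g : E → ℝ be convex and continuous, and let 0 < λ ≤ 1/L. Let x_k ∈ E, let x_{k+1} be a global minimizer over y ∈ E of y ↦ (1/(2λ))·‖y - (x_k - λ·∇f(x_k))‖² + g(y), and set G = (1/λ)·(x_k - x_{k+1}) and F = f + g. Then for every z ∈ E, F(x_{k+1}) ≤ F(z) - ⟨G, z - x_k⟩ - (1/(2λ))·‖x_{k+1} - x_k‖². -/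
/-!
Write `d = xₖ₊₁ - xₖ`. Three first-order inequalities are added up: the descent lemma
`f xₖ₊₁ ≤ f xₖ + ⟪∇f xₖ, d⟫ + L/2 ‖d‖²` (from the Lipschitz gradient), the tangent inequality
`f xₖ + ⟪∇f xₖ, z - xₖ⟫ ≤ f z` (from convexity of `f`), and the optimality condition of the
proximal step, which says that `G - ∇f xₖ` is a subgradient of `g` at `xₖ₊₁`. The inner
products with `∇f xₖ` cancel, `⟪G, d⟫ = -‖d‖²/λ`, and `λ ≤ 1/L` absorbs `L/2 ‖d‖²` into
`‖d‖²/λ`, leaving `-‖d‖²/(2λ)`.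
-/

open RealInnerProductSpace Set Filter Topology

theorem ConvexOn.apply_add_smul_sub_le {E : Type*} [AddCommGroup E] [Module ℝ E] {g : E → ℝ}
    (hg : ConvexOn ℝ univ g) (x z : E) {t : ℝ} (ht₀ : 0 ≤ t) (ht₁ : t ≤ 1) :
    g (x + t • (z - x)) ≤ g x + t * (g z - g x) := by
  have h := hg.2 (mem_univ x) (mem_univ z) (sub_nonneg.2 ht₁) ht₀ (sub_add_cancel 1 t)
  have hpt : (1 - t) • x + t • z = x + t • (z - x) := by module
  rw [hpt, smul_eq_mul, smul_eq_mul] at h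
  linarith

section

variable {E : Type*} [NormedAddCommGroup E] [InnerProductSpace ℝ E] [CompleteSpace E]

theorem HasGradientAt.hasDerivAt_comp_add_smul {f : E → ℝ} {f' x w : E} {t : ℝ}
    (h : HasGradientAt f f' (x + t • w)) :
    HasDerivAt (fun s : ℝ => f (x + s • w)) ⟪f', w⟫ t := by
  have hline : HasDerivAt (fun s : ℝ => x + s • w) w t := by
    simpa using ((hasDerivAt_id t).smul_const w).const_add x
  have := (hasGradientAt_iff_hasFDerivAt.1 h).comp_hasDerivAt t hline
  simp only [InnerProductSpace.toDual_apply_apply] at this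
  exact this

theorem HasGradientAt.tendsto_slope_zero_right {f : E → ℝ} {f' x : E} (h : HasGradientAt f f' x)
    (w : E) : Tendsto (fun t : ℝ => t⁻¹ * (f (x + t • w) - f x)) (𝓝[>] 0) (𝓝 ⟪f', w⟫) := by
  simpa using ((hasGradientAt_iff_hasFDerivAt.1 h).hasLineDerivAt w).tendsto_slope_zero_right

theorem ConvexOn.add_inner_sub_le_of_hasGradientAt {f : E → ℝ} {f' x : E}
    (hf : ConvexOn ℝ univ f) (h : HasGradientAt f f' x) (z : E) :
    f x + ⟪f', z - x⟫ ≤ f z := by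
  have hslope : ∀ᶠ t in 𝓝[>] 0, t⁻¹ * (f (x + t • (z - x)) - f x) ≤ f z - f x := by
    filter_upwards [Ioc_mem_nhdsGT zero_lt_one] with t ht
    rw [inv_mul_le_iff₀ ht.1]
    linarith [hf.apply_add_smul_sub_le x z ht.1.le ht.2]
  linarith [le_of_tendsto (h.tendsto_slope_zero_right (z - x)) hslope]

theorem ConvexOn.le_add_inner_of_isMinOn_add {h g : E → ℝ} {h' x : E}
    (hg : ConvexOn ℝ univ g) (hh : HasGradientAt h h' x) (hmin : IsMinOn (h + g) univ x)
    (z : E) : g x ≤ g z + ⟪h', z - x⟫ := by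
  have hslope : ∀ᶠ t in 𝓝[>] 0, g x - g z ≤ t⁻¹ * (h (x + t • (z - x)) - h x) := by
    filter_upwards [Ioc_mem_nhdsGT zero_lt_one] with t ht
    rw [le_inv_mul_iff₀ ht.1]
    have := isMinOn_univ_iff.1 hmin (x + t • (z - x))
    simp only [Pi.add_apply] at this
    linarith [hg.apply_add_smul_sub_le x z ht.1.le ht.2]
  linarith [ge_of_tendsto (hh.tendsto_slope_zero_right (z - x)) hslope]

theorem hasGradientAt_mul_norm_sub_sq (c : ℝ) (v x : E) :
    HasGradientAt (fun y => c * ‖y - v‖ ^ 2) ((2 * c) • (x - v)) x := by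
  rw [hasGradientAt_iff_hasFDerivAt]
  refine (((hasFDerivAt_id x).sub_const v).norm_sq.const_mul c).congr_fderiv ?_
  ext w
  simp
  ring

theorem ConvexOn.le_add_inner_of_prox {g : E → ℝ} (hg : ConvexOn ℝ univ g) {lam : ℝ} {v x : E}
    (hprox : ∀ y : E, (1 / (2 * lam)) * ‖x - v‖ ^ 2 + g x ≤ (1 / (2 * lam)) * ‖y - v‖ ^ 2 + g y)
    (z : E) : g x ≤ g z + ⟪(1 / lam) • (x - v), z - x⟫ := by
  have := hg.le_add_inner_of_isMinOn_add (hasGradientAt_mul_norm_sub_sq (1 / (2 * lam)) v x)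
    (isMinOn_univ_iff.2 hprox) z
  convert this using 4
  ring

theorem le_add_inner_add_sq_of_gradient_lipschitz {f : E → ℝ} {f' : E → E} {L : ℝ}
    (hf : ∀ x, HasGradientAt f (f' x) x) (hL : ∀ x y, ‖f' x - f' y‖ ≤ L * ‖x - y‖) (x y : E) :
    f y ≤ f x + ⟪f' x, y - x⟫ + L / 2 * ‖y - x‖ ^ 2 := by
  set w := y - x
  let φ : ℝ → ℝ := fun t => f (x + t • w) - t * ⟪f' x, w⟫ - L / 2 * t ^ 2 * ‖w‖ ^ 2
  have hφ : ∀ t, HasDerivAt φ (⟪f' (x + t • w) - f' x, w⟫ - L * t * ‖w‖ ^ 2) t := by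
    intro t
    refine ((((hf (x + t • w)).hasDerivAt_comp_add_smul).sub
      ((hasDerivAt_id t).mul_const ⟪f' x, w⟫)).sub
      (((hasDerivAt_pow 2 t).const_mul (L / 2)).mul_const (‖w‖ ^ 2))).congr_deriv ?_
    rw [inner_sub_left]
    ring
  have hderiv : ∀ t ∈ interior (Icc (0 : ℝ) 1),
      ⟪f' (x + t • w) - f' x, w⟫ - L * t * ‖w‖ ^ 2 ≤ 0 := by
    intro t ht
    rw [interior_Icc] at ht
    have := hL (x + t • w) x
    rw [add_sub_cancel_left, norm_smul, Real.norm_of_nonneg ht.1.le] at this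
    nlinarith [real_inner_le_norm (f' (x + t • w) - f' x) w, norm_nonneg w]
  have hanti := antitoneOn_of_hasDerivWithinAt_nonpos (convex_Icc 0 1)
    (HasDerivAt.continuousOn fun t _ => hφ t) (fun t _ => (hφ t).hasDerivWithinAt) hderiv
  have := hanti (left_mem_Icc.2 zero_le_one) (right_mem_Icc.2 zero_le_one) zero_le_one
  simp only [φ, w, one_smul, add_sub_cancel, one_mul, one_pow, mul_one, zero_smul, add_zero,
    zero_mul, sub_zero, ne_eq, OfNat.ofNat_ne_zero, not_false_eq_true, zero_pow, mul_zero] at this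
  linarith

end

theorem prox_gd_descent_lemma_general {E : Type*} [NormedAddCommGroup E]
    [InnerProductSpace ℝ E] [CompleteSpace E]
    (f g : E → ℝ) (f' : E → E) (L : ℝ) (hL : 0 < L)
    (hdiff : ∀ x, HasGradientAt f (f' x) x)
    (hfconv : ConvexOn ℝ Set.univ f)
    (hsmooth : ∀ x y, ‖f' x - f' y‖ ≤ L * ‖x - y‖)
    (hgconv : ConvexOn ℝ Set.univ g)
    (lam : ℝ) (hlam : 0 < lam) (hlamL : lam ≤ 1 / L)
    (xk xk1 : E)
    (hprox : ∀ y : E,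
      (1 / (2 * lam)) * ‖xk1 - (xk - lam • f' xk)‖ ^ 2 + g xk1 ≤
        (1 / (2 * lam)) * ‖y - (xk - lam • f' xk)‖ ^ 2 + g y)
    (G : E) (hG : G = (1 / lam) • (xk - xk1))
    (F : E → ℝ) (hF : F = fun y => f y + g y) :
    ∀ z : E,
      F xk1 ≤ F z - ⟪G, z - xk⟫ - (1 / (2 * lam)) * ‖xk1 - xk‖ ^ 2 := by
  intro z
  have hdescent := le_add_inner_add_sq_of_gradient_lipschitz hdiff hsmooth xk xk1
  have htangent := hfconv.add_inner_sub_le_of_hasGradientAt (hdiff xk) z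
  have hsubgrad := hgconv.le_add_inner_of_prox hprox z
  have hprox_grad : (1 / lam) • (xk1 - (xk - lam • f' xk)) = f' xk - G := by
    rw [hG]
    match_scalars <;> field_simp
  have hG_inner : ⟪G, xk1 - xk⟫ = -(1 / lam * ‖xk1 - xk‖ ^ 2) := by
    rw [hG, real_inner_smul_left, ← neg_sub xk1 xk, inner_neg_left, real_inner_self_eq_norm_sq]
    ring
  have hsplit (u : E) : ⟪u, z - xk1⟫ = ⟪u, z - xk⟫ - ⟪u, xk1 - xk⟫ := by
    rw [← inner_sub_right, sub_sub_sub_cancel_right]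
  rw [hprox_grad, inner_sub_left, hsplit, hsplit, hG_inner] at hsubgrad
  have hstep : L / 2 * ‖xk1 - xk‖ ^ 2 + 1 / (2 * lam) * ‖xk1 - xk‖ ^ 2 ≤
      1 / lam * ‖xk1 - xk‖ ^ 2 := by
    have hLlam := (le_one_div hlam hL).1 hlamL
    rw [← add_mul, mul_comm 2, ← div_div]
    gcongr
    linarith
  simp only [hF]
  linarith

theorem prox_gd_descent_lemma {E : Type*} [NormedAddCommGroup E]
    [InnerProductSpace ℝ E] [CompleteSpace E]
    (f g : E → ℝ) (f' : E → E) (L : ℝ) (hL : 0 < L)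
    (hdiff : ∀ x, HasGradientAt f (f' x) x)
    (hfconv : ConvexOn ℝ Set.univ f)
    (hsmooth : ∀ x y, ‖f' x - f' y‖ ≤ L * ‖x - y‖)
    (hgconv : ConvexOn ℝ Set.univ g) (hgcont : Continuous g)
    (lam : ℝ) (hlam : 0 < lam) (hlamL : lam ≤ 1 / L)
    (xk xk1 : E)
    (hprox : ∀ y : E,
      (1 / (2 * lam)) * ‖xk1 - (xk - lam • f' xk)‖ ^ 2 + g xk1 ≤
        (1 / (2 * lam)) * ‖y - (xk - lam • f' xk)‖ ^ 2 + g y)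
    (G : E) (hG : G = (1 / lam) • (xk - xk1))
    (F : E → ℝ) (hF : F = fun y => f y + g y) :
    ∀ z : E,
      F xk1 ≤ F z - ⟪G, z - xk⟫ - (1 / (2 * lam)) * ‖xk1 - xk‖ ^ 2 :=
  prox_gd_descent_lemma_general f g f' L hL hdiff hfconv hsmooth hgconv lam hlam hlamL xk xk1 hprox
    G hG F hF
end

section
/- Let f : E → ℝ be differentiable, convex, and L-smooth with L > 0, let g : E → ℝ be convex and continuous, let 0 < λ ≤ 1/L, and let x* ∈ E be a global minimizer of F = f + g. Let x_k ∈ E and let x_{k+1} be a global minimizer over y ∈ E of y ↦ (1/(2λ))·‖y - (x_k - λ·∇f(x_k))‖² + g(y). Then F(x_{k+1}) - F(x*) ≤ (1/(2λ))·(‖x_k - x*‖² - ‖x_{k+1} - x*‖²). -/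
open RealInnerProductSpace Set Filter Topology AffineMap

/-!
The descent lemma bounds `f x_{k+1}` by the quadratic model of `f` at `x_k`, whose curvature
`L / 2` is at most `1 / (2λ)`; the gradient inequality of the convex `f` bounds the linear part
of the model at `x*` by `f x*`. The prox objective `ψ y = ‖y - (x_k - λ ∇f x_k)‖² / (2λ) + g y`
is `1/λ`-strongly convex, so its minimizer satisfies `ψ x_{k+1} + ‖x* - x_{k+1}‖² / (2λ) ≤ ψ x*`.
Expanding the squares in `ψ` around `x_k` and adding the three inequalities gives the bound.
-/

theorem HasGradientAt.hasDerivAt_comp_lineMap {E : Type*} [NormedAddCommGroup E]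
    [InnerProductSpace ℝ E] [CompleteSpace E] {f : E → ℝ} {g x y : E} {t : ℝ}
    (hf : HasGradientAt f g (lineMap x y t)) :
    HasDerivAt (fun s : ℝ => f (lineMap x y s)) ⟪g, y - x⟫ t := by
  have h := hf.hasFDerivAt.comp_hasDerivAt t hasDerivAt_lineMap
  simp only [InnerProductSpace.toDual_apply_apply] at h
  exact h

theorem ConvexOn.add_inner_le_of_hasGradientAt {E : Type*} [NormedAddCommGroup E]
    [InnerProductSpace ℝ E] [CompleteSpace E] {f : E → ℝ} {g x : E}
    (hf : ConvexOn ℝ univ f) (hg : HasGradientAt f g x) (y : E) :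
    f x + ⟪g, y - x⟫ ≤ f y := by
  have hline : ConvexOn ℝ univ (fun t : ℝ => f (lineMap x y t)) :=
    hf.comp_affineMap (lineMap x y)
  have h := hline.le_slope_of_hasDerivAt (mem_univ 0) (mem_univ 1) one_pos
    (HasGradientAt.hasDerivAt_comp_lineMap (by simpa using hg))
  simp only [slope_def_field, lineMap_apply_one, lineMap_apply_zero, sub_zero, div_one] at h
  linarith

theorem le_add_inner_add_sq_of_lipschitz_gradient {E : Type*} [NormedAddCommGroup E]
    [InnerProductSpace ℝ E] [CompleteSpace E] {f : E → ℝ} {f' : E → E} {L : ℝ}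
    (hf : ∀ x, HasGradientAt f (f' x) x) (hsmooth : ∀ x y, ‖f' x - f' y‖ ≤ L * ‖x - y‖)
    (x y : E) :
    f y ≤ f x + ⟪f' x, y - x⟫ + L / 2 * ‖y - x‖ ^ 2 := by
  have hderiv (t : ℝ) := (hf (lineMap x y t)).hasDerivAt_comp_lineMap
  have hmodel (t : ℝ) :
      HasDerivAt (fun s : ℝ => f x + s * ⟪f' x, y - x⟫ + L / 2 * s ^ 2 * ‖y - x‖ ^ 2)
        (⟪f' x, y - x⟫ + L * t * ‖y - x‖ ^ 2) t := by
    have h := (((hasDerivAt_id t).mul_const ⟪f' x, y - x⟫).const_add (f x)).add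
      (((hasDerivAt_pow 2 t).const_mul (L / 2)).mul_const (‖y - x‖ ^ 2))
    exact h.congr_deriv <| by
      simp only [one_mul, Nat.add_one_sub_one, pow_one, Nat.cast_ofNat]; ring
  have hbound (t : ℝ) (ht : 0 ≤ t) :
      ⟪f' (lineMap x y t), y - x⟫ ≤ ⟪f' x, y - x⟫ + L * t * ‖y - x‖ ^ 2 := by
    have hdist : ‖lineMap x y t - x‖ = t * ‖y - x‖ := by
      rw [← dist_eq_norm, dist_lineMap_left, Real.norm_of_nonneg ht, dist_comm, dist_eq_norm]
    calc ⟪f' (lineMap x y t), y - x⟫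
        = ⟪f' x, y - x⟫ + ⟪f' (lineMap x y t) - f' x, y - x⟫ := by rw [inner_sub_left]; ring
      _ ≤ ⟪f' x, y - x⟫ + ‖f' (lineMap x y t) - f' x‖ * ‖y - x‖ := by
        gcongr; exact real_inner_le_norm _ _
      _ ≤ ⟪f' x, y - x⟫ + L * ‖lineMap x y t - x‖ * ‖y - x‖ := by
        gcongr; exact hsmooth _ _
      _ = ⟪f' x, y - x⟫ + L * t * ‖y - x‖ ^ 2 := by rw [hdist]; ring
  have h := image_le_of_deriv_right_le_deriv_boundary
    (fun t _ => (hderiv t).continuousAt.continuousWithinAt)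
    (fun t _ => (hderiv t).hasDerivWithinAt) (by simp)
    (fun t _ => (hmodel t).continuousAt.continuousWithinAt)
    (fun t _ => (hmodel t).hasDerivWithinAt) (fun t ht => hbound t ht.1)
    (right_mem_Icc.2 zero_le_one)
  simpa using h

theorem UniformConvexOn.add_le_of_isMinOn {E : Type*} [NormedAddCommGroup E] [NormedSpace ℝ E]
    {s : Set E} {φ : ℝ → ℝ} {f : E → ℝ} {y z : E} (hf : UniformConvexOn s φ f)
    (hy : y ∈ s) (hz : z ∈ s) (hmin : IsMinOn f s z) :
    f z + φ ‖y - z‖ ≤ f y := by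
  -- compare `f z` with `f` on the segment from `z` towards `y`, then let the step `t` tend to `0`
  have hlt (t : ℝ) (ht : t ∈ Ioo (0 : ℝ) 1) : f z + (1 - t) * φ ‖y - z‖ ≤ f y := by
    have hseg := hf.2 hy hz ht.1.le (sub_nonneg.2 ht.2.le) (add_sub_cancel t 1)
    have hle : f z ≤ f (t • y + (1 - t) • z) :=
      hmin (hf.1 hy hz ht.1.le (sub_nonneg.2 ht.2.le) (add_sub_cancel t 1))
    simp only [smul_eq_mul] at hseg
    nlinarith [ht.1]
  have hlim : Tendsto (fun t : ℝ => f z + (1 - t) * φ ‖y - z‖) (𝓝[>] 0)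
      (𝓝 (f z + φ ‖y - z‖)) :=
    (Continuous.tendsto' (by fun_prop) 0 _ (by simp)).mono_left nhdsWithin_le_nhds
  exact le_of_tendsto hlim (eventually_of_mem (Ioo_mem_nhdsGT one_pos) hlt)

theorem ConvexOn.strongConvexOn_mul_norm_sub_sq_add {E : Type*} [NormedAddCommGroup E]
    [InnerProductSpace ℝ E] {s : Set E} {g : E → ℝ} (hg : ConvexOn ℝ s g) (c : ℝ) (u : E) :
    StrongConvexOn s (2 * c) (fun y => c * ‖y - u‖ ^ 2 + g y) := by
  have hlin : ConvexOn ℝ s fun y => -(2 * c) * ⟪u, y⟫ + c * ‖u‖ ^ 2 :=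
    (((-(2 * c)) • innerₛₗ ℝ u).convexOn hg.1).add_const _
  rw [strongConvexOn_iff_convex]
  refine (hg.add hlin).congr fun y _ => ?_
  simp only [Pi.add_apply]
  rw [norm_sub_sq_real, real_inner_comm]
  ring

theorem prox_gd_one_step_gap_bound_general {E : Type*} [NormedAddCommGroup E]
    [InnerProductSpace ℝ E] [CompleteSpace E]
    (f g : E → ℝ) (f' : E → E) (L : ℝ) (hL : 0 < L)
    (hdiff : ∀ x, HasGradientAt f (f' x) x)
    (hfconv : ConvexOn ℝ Set.univ f)
    (hsmooth : ∀ x y, ‖f' x - f' y‖ ≤ L * ‖x - y‖)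
    (hgconv : ConvexOn ℝ Set.univ g)
    (lam : ℝ) (hlam : 0 < lam) (hlamL : lam ≤ 1 / L)
    (F : E → ℝ) (hF : F = fun y => f y + g y)
    (xstar : E)
    (xk xk1 : E)
    (hprox : ∀ y : E,
      (1 / (2 * lam)) * ‖xk1 - (xk - lam • f' xk)‖ ^ 2 + g xk1 ≤
        (1 / (2 * lam)) * ‖y - (xk - lam • f' xk)‖ ^ 2 + g y) :
    F xk1 - F xstar ≤
      (1 / (2 * lam)) * (‖xk - xstar‖ ^ 2 - ‖xk1 - xstar‖ ^ 2) := by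
  set c := 1 / (2 * lam)
  have hexpand (y : E) : c * ‖y - (xk - lam • f' xk)‖ ^ 2 =
      c * ‖y - xk‖ ^ 2 + ⟪f' xk, y - xk⟫ + lam / 2 * ‖f' xk‖ ^ 2 := by
    rw [sub_sub_eq_add_sub, add_sub_right_comm, norm_add_sq_real, norm_smul,
      real_inner_smul_right, Real.norm_of_nonneg hlam.le, real_inner_comm]
    simp only [c]
    field_simp
  have hprox_strong := (hgconv.strongConvexOn_mul_norm_sub_sq_add c (xk - lam • f' xk))
    |>.add_le_of_isMinOn (mem_univ xstar) (mem_univ xk1) (isMinOn_univ_iff.2 hprox)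
  have hdescent := le_add_inner_add_sq_of_lipschitz_gradient hdiff hsmooth xk xk1
  have hconv := hfconv.add_inner_le_of_hasGradientAt (hdiff xk) xstar
  have hstep : L / 2 ≤ c := by
    rw [le_div_iff₀ hL] at hlamL
    rw [le_div_iff₀ (by positivity)]
    linarith
  have hcurv := mul_le_mul_of_nonneg_right hstep (sq_nonneg ‖xk1 - xk‖)
  simp only [hexpand] at hprox_strong
  rw [hF, norm_sub_rev xk, norm_sub_rev xk1]
  linarith

theorem prox_gd_one_step_gap_bound {E : Type*} [NormedAddCommGroup E]
    [InnerProductSpace ℝ E] [CompleteSpace E]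
    (f g : E → ℝ) (f' : E → E) (L : ℝ) (hL : 0 < L)
    (hdiff : ∀ x, HasGradientAt f (f' x) x)
    (hfconv : ConvexOn ℝ Set.univ f)
    (hsmooth : ∀ x y, ‖f' x - f' y‖ ≤ L * ‖x - y‖)
    (hgconv : ConvexOn ℝ Set.univ g) (hgcont : Continuous g)
    (lam : ℝ) (hlam : 0 < lam) (hlamL : lam ≤ 1 / L)
    (F : E → ℝ) (hF : F = fun y => f y + g y)
    (xstar : E) (hmin : ∀ y, F xstar ≤ F y)
    (xk xk1 : E)
    (hprox : ∀ y : E,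
      (1 / (2 * lam)) * ‖xk1 - (xk - lam • f' xk)‖ ^ 2 + g xk1 ≤
        (1 / (2 * lam)) * ‖y - (xk - lam • f' xk)‖ ^ 2 + g y) :
    F xk1 - F xstar ≤
      (1 / (2 * lam)) * (‖xk - xstar‖ ^ 2 - ‖xk1 - xstar‖ ^ 2) :=
  prox_gd_one_step_gap_bound_general f g f' L hL hdiff hfconv hsmooth hgconv lam hlam hlamL F hF
    xstar xk xk1 hprox
end
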